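/- For the i.i.d. meta-task iteration with mutually independent previous-step weights, the variances satisfy the exact recursion Var(ỹ^{(k)}_{a→i}) = (1/δ²) Σ_{j ∈ ∂⁻¹a^{(k)}\{i}} [ Σ_{b ∈ ∂j^{(k)}\{a}} ( Var(ỹ^{(k-1)}_{b→j}) + (1 - (2p_b - 1)²)·(E[ỹ^{(k-1)}_{b→j}])² ) + (1 - (2p_a - 1)²)·( Σ_{b ∈ ∂j^{(k)}\{a}} (2p_b - 1)·E[ỹ^{(k-1)}_{b→j}] )² ], where δ = (s-1)(r-1). -/

import Mathlib

/-!
Write `ỹ_{a→i} = δ⁻¹ ∑_j A_{ja} T_j` with `T_j = ∑_{b ≠ a} A_{jb} ỹ_{b→j}`. The summands for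
different questions `j` are functions of disjoint sets of edges, hence independent, and so are
the terms of each `T_j`; the variance is therefore additive over both sums. For a `±1`-valued
`X` independent of a square-integrable `Y` one has `(XY)² = Y²` and `E[XY] = E[X] E[Y]`, so
`Var(XY) = Var Y + (1 - E[X]²) E[Y]²`. This is applied once to `A_{ja} T_j` and once to each
`A_{jb} ỹ_{b→j}`, with `E[A_{jb}] = z_j (2 p_b - 1)` and `z_j² = 1`.
-/

open MeasureTheory ProbabilityTheory

section SignVariables

variable {Ω : Type*} {mΩ : MeasurableSpace Ω} {μ : Measure Ω}

lemma norm_eq_one_of_sq_eq_one {x : ℝ} (hx : x ^ 2 = 1) : ‖x‖ = 1 := by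
  rw [Real.norm_eq_abs, ← pow_eq_one_iff_of_nonneg (abs_nonneg x) two_ne_zero, sq_abs, hx]

lemma MeasureTheory.MemLp.mul_of_sq_eq_one {p : ENNReal} {X Y : Ω → ℝ} (hY : MemLp Y p μ)
    (hX : AEStronglyMeasurable X μ) (hXsq : ∀ᵐ ω ∂μ, X ω ^ 2 = 1) :
    MemLp (fun ω => X ω * Y ω) p μ :=
  hY.of_le (hX.mul hY.1) <| hXsq.mono fun ω h => by
    rw [norm_mul, norm_eq_one_of_sq_eq_one h, one_mul]

lemma integral_eq_of_forall_eq_or_eq_neg [IsProbabilityMeasure μ] {X : Ω → ℝ}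
    (hX : Measurable X) {z : ℝ} (hval : ∀ ω, X ω = z ∨ X ω = -z) :
    μ[X] = z * (2 * μ.real {ω | X ω = z} - 1) := by
  set E := {ω | X ω = z}
  have hE : MeasurableSet E := hX (measurableSet_singleton z)
  have hXE : X = fun ω => z * (2 * E.indicator 1 ω - 1) := by
    funext ω
    by_cases hω : ω ∈ E
    · simp [Set.indicator_of_mem hω, show X ω = z from hω]; ring
    · simp [Set.indicator_of_notMem hω, (hval ω).resolve_left hω]
  rw [hXE, integral_const_mul, integral_sub ((integrable_const 1).indicator hE |>.const_mul 2)
    (integrable_const 1), integral_const_mul, integral_indicator_one hE]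
  simp

variable [IsProbabilityMeasure μ]

lemma variance_mul_of_sq_eq_one {X Y : Ω → ℝ} (hX : AEStronglyMeasurable X μ)
    (hXsq : ∀ᵐ ω ∂μ, X ω ^ 2 = 1) (hY : MemLp Y 2 μ) (hXY : IndepFun X Y μ) :
    variance (fun ω => X ω * Y ω) μ = variance Y μ + (1 - (μ[X]) ^ 2) * (μ[Y]) ^ 2 := by
  have hsq : ∫ ω, (X ω * Y ω) ^ 2 ∂μ = ∫ ω, Y ω ^ 2 ∂μ :=
    integral_congr_ae <| hXsq.mono fun ω h => by simp only [mul_pow, h, one_mul]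
  have hmean := hXY.integral_fun_mul_eq_mul_integral hX hY.1
  rw [variance_eq_sub (hY.mul_of_sq_eq_one hX hXsq), variance_eq_sub hY]
  simp only [Pi.pow_apply] at hsq ⊢
  rw [hsq, hmean]
  ring

lemma variance_mul_sum_mul {ι : Type*} {t : Finset ι} {X : Ω → ℝ} {B Y : ι → Ω → ℝ}
    (hX : AEStronglyMeasurable X μ) (hXsq : ∀ᵐ ω ∂μ, X ω ^ 2 = 1)
    (hB : ∀ b ∈ t, AEStronglyMeasurable (B b) μ) (hBsq : ∀ b ∈ t, ∀ᵐ ω ∂μ, B b ω ^ 2 = 1)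
    (hY : ∀ b ∈ t, MemLp (Y b) 2 μ) (hBY : ∀ b ∈ t, IndepFun (B b) (Y b) μ)
    (hpair : (t : Set ι).Pairwise fun b b' =>
      IndepFun (fun ω => B b ω * Y b ω) (fun ω => B b' ω * Y b' ω) μ)
    (hXT : IndepFun X (fun ω => ∑ b ∈ t, B b ω * Y b ω) μ) :
    variance (fun ω => X ω * ∑ b ∈ t, B b ω * Y b ω) μ
      = ∑ b ∈ t, (variance (Y b) μ + (1 - (μ[B b]) ^ 2) * (μ[Y b]) ^ 2)
        + (1 - (μ[X]) ^ 2) * (∑ b ∈ t, μ[B b] * μ[Y b]) ^ 2 := by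
  have hBYmem : ∀ b ∈ t, MemLp (fun ω => B b ω * Y b ω) 2 μ := fun b hb =>
    (hY b hb).mul_of_sq_eq_one (hB b hb) (hBsq b hb)
  have hsum : (fun ω => ∑ b ∈ t, B b ω * Y b ω) = ∑ b ∈ t, fun ω => B b ω * Y b ω := by
    funext ω; rw [Finset.sum_apply]
  rw [variance_mul_of_sq_eq_one hX hXsq (memLp_finsetSum t hBYmem) hXT,
    integral_finsetSum t fun b hb => (hBYmem b hb).integrable one_le_two, hsum,
    IndepFun.variance_sum hBYmem hpair]
  congr 1
  · exact Finset.sum_congr rfl fun b hb =>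
      variance_mul_of_sq_eq_one (hB b hb) (hBsq b hb) (hY b hb) (hBY b hb)
  · congr 2
    exact Finset.sum_congr rfl fun b hb =>
      (hBY b hb).integral_fun_mul_eq_mul_integral (hB b hb) (hY b hb).1

end SignVariables

section Blocks

variable {Ω ι β γ δ : Type*} {mΩ : MeasurableSpace Ω} {μ : Measure Ω} [mβ : MeasurableSpace β]
  [MeasurableSpace γ] [MeasurableSpace δ] {f : ι → Ω → β} {S T : Set ι}

lemma measurable_iSup_comap_of_mem {i : ι} (hi : i ∈ S) :
    Measurable[⨆ k ∈ S, mβ.comap (f k)] (f i) :=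
  Measurable.of_comap_le (le_iSup₂ (f := fun k (_ : k ∈ S) => mβ.comap (f k)) i hi)

lemma ProbabilityTheory.iIndepFun.indepFun_of_measurable_iSup (hf : iIndepFun f μ)
    (hmeas : ∀ i, Measurable (f i)) (hST : Disjoint S T) {X : Ω → γ} {Y : Ω → δ}
    (hX : Measurable[⨆ i ∈ S, mβ.comap (f i)] X) (hY : Measurable[⨆ i ∈ T, mβ.comap (f i)] Y) :
    IndepFun X Y μ := by
  rw [IndepFun_iff_Indep]
  exact indep_of_indep_of_le (indep_iSup_of_disjoint (fun i => (hmeas i).comap_le) hf.iIndep hST)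
    hX.comap_le hY.comap_le

end Blocks

/-- Answers `A j b` are indexed by the edges `(j, b)` listed from the question side, previous
weights `yprev b j` by the edges `(b, j)` listed from the user side. -/
abbrev EdgeIndex {U Q : Type*} (adj : Q → Finset U) (inv : U → Finset Q) :=
  {x : Q × U // x.2 ∈ adj x.1} ⊕ {x : U × Q // x.2 ∈ inv x.1}

namespace EdgeIndex

variable {Ω U Q : Type*} {mΩ : MeasurableSpace Ω} {μ : Measure Ω}
  {adj : Q → Finset U} {inv : U → Finset Q}

def question : EdgeIndex adj inv → Q := Sum.elim (fun e => e.1.1) (fun e => e.1.2)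

def user : EdgeIndex adj inv → U := Sum.elim (fun e => e.1.2) (fun e => e.1.1)

def edgesAt (j : Q) (t : Finset U) : Set (EdgeIndex adj inv) :=
  {k | k.question = j ∧ k.user ∈ t}

lemma edgesAt_mono {j : Q} {t t' : Finset U} (h : t ⊆ t') :
    edgesAt (adj := adj) (inv := inv) j t ⊆ edgesAt j t' :=
  fun _ hk => ⟨hk.1, h hk.2⟩

lemma disjoint_edgesAt {j j' : Q} {t t' : Finset U} (h : j ≠ j' ∨ Disjoint t t') :
    Disjoint (edgesAt (adj := adj) (inv := inv) j t) (edgesAt j' t') := by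
  rw [Set.disjoint_left]
  rintro k ⟨rfl, hk⟩ ⟨hj, hk'⟩
  rcases h with h | h
  · exact h hj
  · exact Finset.disjoint_left.1 h hk hk'

variable (adj inv) (A : Q → U → Ω → ℝ) (yprev : U → Q → Ω → ℝ)

def family : EdgeIndex adj inv → Ω → ℝ :=
  Sum.elim (fun e => A e.1.1 e.1.2) (fun e => yprev e.1.1 e.1.2)

variable {adj inv A yprev}

lemma measurable_family (hAmeas : ∀ j b, b ∈ adj j → Measurable (A j b))
    (hymeas : ∀ b j, j ∈ inv b → Measurable (yprev b j)) (k : EdgeIndex adj inv) :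
    Measurable (family adj inv A yprev k) := by
  rcases k with ⟨⟨j, b⟩, hb⟩ | ⟨⟨b, j⟩, hj⟩
  · exact hAmeas j b hb
  · exact hymeas b j hj

lemma measurable_sum_mul (hbip : ∀ b j, b ∈ adj j → j ∈ inv b) {j : Q} {t : Finset U}
    (ht : t ⊆ adj j) {S : Set (EdgeIndex adj inv)} (hS : edgesAt j t ⊆ S) :
    Measurable[⨆ k ∈ S, MeasurableSpace.comap (family adj inv A yprev k) inferInstance]
      (fun ω => ∑ b ∈ t, A j b ω * yprev b j ω) :=
  Finset.measurable_sum t fun b hb =>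
    have hA : (Sum.inl ⟨(j, b), ht hb⟩ : EdgeIndex adj inv) ∈ S := hS ⟨rfl, hb⟩
    have hy : (Sum.inr ⟨(b, j), hbip b j (ht hb)⟩ : EdgeIndex adj inv) ∈ S := hS ⟨rfl, hb⟩
    (measurable_iSup_comap_of_mem hA).mul (measurable_iSup_comap_of_mem hy)

lemma indepFun_mul_of_ne (hbip : ∀ b j, b ∈ adj j → j ∈ inv b)
    (hindep : iIndepFun (family adj inv A yprev) μ)
    (hmeas : ∀ k, Measurable (family adj inv A yprev k))
    {j : Q} {b b' : U} (hb : b ∈ adj j) (hb' : b' ∈ adj j) (hne : b ≠ b') :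
    IndepFun (fun ω => A j b ω * yprev b j ω) (fun ω => A j b' ω * yprev b' j ω) μ := by
  simpa only [Finset.sum_singleton] using hindep.indepFun_of_measurable_iSup hmeas
    (disjoint_edgesAt (Or.inr (Finset.disjoint_singleton.2 hne)))
    (measurable_sum_mul hbip (Finset.singleton_subset_iff.2 hb) subset_rfl)
    (measurable_sum_mul hbip (Finset.singleton_subset_iff.2 hb') subset_rfl)

variable [DecidableEq U]

lemma indepFun_answer_sum_mul (hbip : ∀ b j, b ∈ adj j → j ∈ inv b)
    (hindep : iIndepFun (family adj inv A yprev) μ)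
    (hmeas : ∀ k, Measurable (family adj inv A yprev k)) {j : Q} {a : U} (ha : a ∈ adj j) :
    IndepFun (A j a) (fun ω => ∑ b ∈ (adj j).erase a, A j b ω * yprev b j ω) μ := by
  have hA : (Sum.inl ⟨(j, a), ha⟩ : EdgeIndex adj inv) ∈ edgesAt j {a} :=
    ⟨rfl, Finset.mem_singleton_self a⟩
  exact hindep.indepFun_of_measurable_iSup hmeas
    (disjoint_edgesAt (Or.inr (Finset.disjoint_singleton_left.2 (Finset.notMem_erase a _))))
    (measurable_iSup_comap_of_mem hA) (measurable_sum_mul hbip (Finset.erase_subset a _) subset_rfl)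

lemma measurable_answer_mul_sum_mul (hbip : ∀ b j, b ∈ adj j → j ∈ inv b) {j : Q} {a : U}
    (ha : a ∈ adj j) :
    Measurable[⨆ k ∈ edgesAt j (adj j),
        MeasurableSpace.comap (family adj inv A yprev k) inferInstance]
      (fun ω => A j a ω * ∑ b ∈ (adj j).erase a, A j b ω * yprev b j ω) := by
  have hA : (Sum.inl ⟨(j, a), ha⟩ : EdgeIndex adj inv) ∈ edgesAt j (adj j) := ⟨rfl, ha⟩
  exact (measurable_iSup_comap_of_mem hA).mul
    (measurable_sum_mul hbip (Finset.erase_subset a _) (edgesAt_mono (Finset.erase_subset a _)))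

lemma indepFun_answer_mul_sum_mul (hbip : ∀ b j, b ∈ adj j → j ∈ inv b)
    (hindep : iIndepFun (family adj inv A yprev) μ)
    (hmeas : ∀ k, Measurable (family adj inv A yprev k))
    {j j' : Q} {a : U} (ha : a ∈ adj j) (ha' : a ∈ adj j') (hne : j ≠ j') :
    IndepFun (fun ω => A j a ω * ∑ b ∈ (adj j).erase a, A j b ω * yprev b j ω)
      (fun ω => A j' a ω * ∑ b ∈ (adj j').erase a, A j' b ω * yprev b j' ω) μ :=
  hindep.indepFun_of_measurable_iSup hmeas (disjoint_edgesAt (Or.inl hne))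
    (measurable_answer_mul_sum_mul hbip ha) (measurable_answer_mul_sum_mul hbip ha')

lemma memLp_answer_mul_sum_mul (hbip : ∀ b j, b ∈ adj j → j ∈ inv b)
    (hmeas : ∀ k, Measurable (family adj inv A yprev k))
    (hAsq : ∀ j b, b ∈ adj j → ∀ ω, A j b ω ^ 2 = 1)
    (hysq : ∀ b j, j ∈ inv b → MemLp (yprev b j) 2 μ) {j : Q} {a : U} (ha : a ∈ adj j) :
    MemLp (fun ω => A j a ω * ∑ b ∈ (adj j).erase a, A j b ω * yprev b j ω) 2 μ := by
  refine (memLp_finsetSum _ fun b hb => ?_).mul_of_sq_eq_one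
    (hmeas (Sum.inl ⟨(j, a), ha⟩)).aestronglyMeasurable (ae_of_all _ (hAsq j a ha))
  have hb := Finset.mem_of_mem_erase hb
  exact (hysq b j (hbip b j hb)).mul_of_sq_eq_one
    (hmeas (Sum.inl ⟨(j, b), hb⟩)).aestronglyMeasurable (ae_of_all _ (hAsq j b hb))

lemma variance_answer_mul_sum_mul [IsProbabilityMeasure μ]
    (hbip : ∀ b j, b ∈ adj j → j ∈ inv b) (hindep : iIndepFun (family adj inv A yprev) μ)
    (hmeas : ∀ k, Measurable (family adj inv A yprev k))
    (hAsq : ∀ j b, b ∈ adj j → ∀ ω, A j b ω ^ 2 = 1)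
    (hysq : ∀ b j, j ∈ inv b → MemLp (yprev b j) 2 μ) {j : Q} {z : ℝ} (hz : z ^ 2 = 1)
    {m : U → ℝ} (hmean : ∀ b ∈ adj j, μ[A j b] = z * m b) {a : U} (ha : a ∈ adj j) :
    variance (fun ω => A j a ω * ∑ b ∈ (adj j).erase a, A j b ω * yprev b j ω) μ
      = ∑ b ∈ (adj j).erase a,
          (variance (yprev b j) μ + (1 - m b ^ 2) * (μ[yprev b j]) ^ 2)
        + (1 - m a ^ 2) * (∑ b ∈ (adj j).erase a, m b * μ[yprev b j]) ^ 2 := by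
  have hmemA : ∀ b ∈ (adj j).erase a, b ∈ adj j := fun b => Finset.mem_of_mem_erase
  rw [variance_mul_sum_mul (X := A j a) (B := A j) (Y := fun b => yprev b j)
    (hmeas (Sum.inl ⟨(j, a), ha⟩)).aestronglyMeasurable
    (ae_of_all _ (hAsq j a ha))
    (fun b hb => (hmeas (Sum.inl ⟨(j, b), hmemA b hb⟩)).aestronglyMeasurable)
    (fun b hb => ae_of_all _ (hAsq j b (hmemA b hb)))
    (fun b hb => hysq b j (hbip b j (hmemA b hb)))
    (fun b hb => hindep.indepFun (i := Sum.inl ⟨(j, b), hmemA b hb⟩)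
      (j := Sum.inr ⟨(b, j), hbip b j (hmemA b hb)⟩) Sum.inl_ne_inr)
    (fun b hb b' hb' hne => indepFun_mul_of_ne hbip hindep hmeas (hmemA b hb) (hmemA b' hb') hne)
    (indepFun_answer_sum_mul hbip hindep hmeas ha), hmean a ha, mul_pow, hz, one_mul]
  congr 1
  · exact Finset.sum_congr rfl fun b hb => by rw [hmean b (hmemA b hb), mul_pow, hz, one_mul]
  · rw [Finset.sum_congr rfl fun b hb => by rw [hmean b (hmemA b hb), mul_assoc],
      ← Finset.mul_sum, mul_pow, hz, one_mul]

end EdgeIndex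

theorem meta_task_variance_recursion_general
    {Ω U Q : Type*} [MeasureSpace Ω] [IsProbabilityMeasure (ℙ : Measure Ω)]
    [DecidableEq U] [DecidableEq Q]
    (adj : Q → Finset U) (inv : U → Finset Q)
    (hbip : ∀ (a : U) (j : Q), a ∈ adj j ↔ j ∈ inv a)
    (r s : ℕ)
    (z : Q → ℝ) (hz : ∀ j, z j = 1 ∨ z j = -1)
    (p : U → ℝ) (hp : ∀ b, p b ∈ Set.Icc (0 : ℝ) 1)
    (A : Q → U → Ω → ℝ) (yprev : U → Q → Ω → ℝ)
    (hAmeas : ∀ j b, b ∈ adj j → Measurable (A j b))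
    (hymeas : ∀ b j, j ∈ inv b → Measurable (yprev b j))
    (hAval : ∀ j b, b ∈ adj j → ∀ ω, A j b ω = z j ∨ A j b ω = -z j)
    (hAdist : ∀ j b, b ∈ adj j → ℙ {ω | A j b ω = z j} = ENNReal.ofReal (p b))
    (hysq : ∀ b j, j ∈ inv b → MemLp (yprev b j) 2 ℙ)
    (hindep : iIndepFun
      (Sum.elim (fun e : {x : Q × U // x.2 ∈ adj x.1} => A e.1.1 e.1.2)
                (fun e : {x : U × Q // x.2 ∈ inv x.1} => yprev e.1.1 e.1.2)) ℙ)
    (a : U) (i : Q) :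
    variance (fun ω => (1 / (((s : ℝ) - 1) * ((r : ℝ) - 1))) *
        ∑ j ∈ (inv a).erase i, ∑ b ∈ (adj j).erase a,
          A j a ω * A j b ω * yprev b j ω) ℙ
      = (1 / (((s : ℝ) - 1) * ((r : ℝ) - 1)) ^ 2) *
          ∑ j ∈ (inv a).erase i,
            ((∑ b ∈ (adj j).erase a,
                (variance (yprev b j) ℙ
                  + (1 - (2 * p b - 1) ^ 2) * (∫ ω, yprev b j ω) ^ 2))
              + (1 - (2 * p a - 1) ^ 2) *
                  (∑ b ∈ (adj j).erase a, (2 * p b - 1) * ∫ ω, yprev b j ω) ^ 2) := by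
  have hbip' : ∀ b j, b ∈ adj j → j ∈ inv b := fun b j => (hbip b j).1
  have hmeas := EdgeIndex.measurable_family hAmeas hymeas
  have hz2 : ∀ j, z j ^ 2 = 1 := fun j => by rcases hz j with h | h <;> simp [h]
  have hAsq : ∀ j b, b ∈ adj j → ∀ ω, A j b ω ^ 2 = 1 := fun j b hb ω => by
    rcases hAval j b hb ω with h | h <;> simp [h, hz2]
  have hAmean : ∀ j, ∀ b ∈ adj j, ∫ ω, A j b ω = z j * (2 * p b - 1) := fun j b hb => by
    rw [integral_eq_of_forall_eq_or_eq_neg (hAmeas j b hb) (hAval j b hb), measureReal_def,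
      hAdist j b hb, ENNReal.toReal_ofReal (hp b).1]
  have ha : ∀ j ∈ (inv a).erase i, a ∈ adj j :=
    fun j hj => (hbip a j).2 (Finset.mem_of_mem_erase hj)
  calc _ = variance (fun ω => 1 / (((s : ℝ) - 1) * ((r : ℝ) - 1)) * ∑ j ∈ (inv a).erase i,
        A j a ω * ∑ b ∈ (adj j).erase a, A j b ω * yprev b j ω) ℙ := by
        simp only [Finset.mul_sum, mul_assoc]
    _ = _ := by
      rw [variance_const_mul, ← Finset.sum_fn, IndepFun.variance_sum
        (fun j hj => EdgeIndex.memLp_answer_mul_sum_mul hbip' hmeas hAsq hysq (ha j hj))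
        (fun j hj j' hj' hne => EdgeIndex.indepFun_answer_mul_sum_mul hbip' hindep hmeas
          (ha j hj) (ha j' hj') hne),
        Finset.sum_congr rfl fun j hj => EdgeIndex.variance_answer_mul_sum_mul hbip' hindep hmeas
          hAsq hysq (hz2 j) (hAmean j) (ha j hj), div_pow, one_pow]

/-- Exact variance recursion for the i.i.d. meta-task iteration: with
`δ = (s-1)(r-1)` and the answers together with the square-integrable previous
weights mutually independent, the updated weight
`ỹ^{(k)}_{a→i} = (1/δ) Σ_{j ∈ ∂⁻¹a^{(k)}\{i}} Σ_{b ∈ ∂j^{(k)}\{a}} A^{(k)}_{ja} A^{(k)}_{jb} ỹ^{(k-1)}_{b→j}`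
satisfies
`Var(ỹ^{(k)}_{a→i}) = (1/δ²) Σ_{j} [ Σ_{b} (Var(ỹ^{(k-1)}_{b→j}) + (1-(2p_b-1)²)(E[ỹ^{(k-1)}_{b→j}])²)
  + (1-(2p_a-1)²)·(Σ_{b} (2p_b-1)·E[ỹ^{(k-1)}_{b→j}])² ]`. -/
theorem meta_task_variance_recursion
    {Ω U Q : Type*} [MeasureSpace Ω] [IsProbabilityMeasure (ℙ : Measure Ω)]
    [DecidableEq U] [DecidableEq Q]
    (adj : Q → Finset U) (inv : U → Finset Q)
    (hbip : ∀ (a : U) (j : Q), a ∈ adj j ↔ j ∈ inv a)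
    (r s : ℕ) (hr : 2 ≤ r) (hs : 2 ≤ s)
    (hadj : ∀ j : Q, (adj j).card = r) (hinv : ∀ a : U, (inv a).card = s)
    (z : Q → ℝ) (hz : ∀ j, z j = 1 ∨ z j = -1)
    (p : U → ℝ) (hp : ∀ b, p b ∈ Set.Icc (0 : ℝ) 1)
    (A : Q → U → Ω → ℝ) (yprev : U → Q → Ω → ℝ)
    (hAmeas : ∀ j b, b ∈ adj j → Measurable (A j b))
    (hymeas : ∀ b j, j ∈ inv b → Measurable (yprev b j))
    (hAval : ∀ j b, b ∈ adj j → ∀ ω, A j b ω = z j ∨ A j b ω = -z j)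
    (hAdist : ∀ j b, b ∈ adj j → ℙ {ω | A j b ω = z j} = ENNReal.ofReal (p b))
    (hysq : ∀ b j, j ∈ inv b → MemLp (yprev b j) 2 ℙ)
    (hindep : iIndepFun
      (Sum.elim (fun e : {x : Q × U // x.2 ∈ adj x.1} => A e.1.1 e.1.2)
                (fun e : {x : U × Q // x.2 ∈ inv x.1} => yprev e.1.1 e.1.2)) ℙ)
    (a : U) (i : Q) :
    variance (fun ω => (1 / (((s : ℝ) - 1) * ((r : ℝ) - 1))) *
        ∑ j ∈ (inv a).erase i, ∑ b ∈ (adj j).erase a,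
          A j a ω * A j b ω * yprev b j ω) ℙ
      = (1 / (((s : ℝ) - 1) * ((r : ℝ) - 1)) ^ 2) *
          ∑ j ∈ (inv a).erase i,
            ((∑ b ∈ (adj j).erase a,
                (variance (yprev b j) ℙ
                  + (1 - (2 * p b - 1) ^ 2) * (∫ ω, yprev b j ω) ^ 2))
              + (1 - (2 * p a - 1) ^ 2) *
                  (∑ b ∈ (adj j).erase a, (2 * p b - 1) * ∫ ω, yprev b j ω) ^ 2) :=
  meta_task_variance_recursion_general adj inv hbip r s z hz p hp A yprev hAmeas hymeas hAval hAdist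
    hysq hindep a i
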